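/- arXiv:0712.0489 — 3 statements merged into one kernel-verified Lean document; each statement's English description precedes it below -/
import Mathlib

section
/- Let G be an infinite (g,o)-growing graph with g ≥ 1 and maximal degree Δ < ∞, set δ = 1 + log(Δ+1), and fix i ∈ {0,…,m}, S ⊆ L_i, U = F_{i+1} ∪ S. Let x ∈ S and y ∈ L_i \ S with graph distance d(x,y) = ℓ > 1. Then for every β with β′ = 2gβ − δ > 0, the μ_U^−-probability of the event that there is a path in the subgraph induced on U ∪ {y} from y to x all of whose vertices lying in U carry spin −1 is at most e^{δ} e^{−β′ℓ}/(1 − e^{−β′}). -/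
/- Common framework: Ising model with boundary conditions on (finite pieces of)
   locally finite graphs, heat-bath Glauber dynamics quantities. -/

open Finset
open scoped Classical

noncomputable section

namespace IsingGlauber

/-- The real spin value of a Boolean spin: `true ↦ +1`, `false ↦ -1`. -/
def spin (b : Bool) : ℝ := if b then 1 else -1

variable {V : Type*}

/-- Neighbourhood finset of a vertex, from an explicit local finiteness witness. -/
def nbr (G : SimpleGraph V) (hlf : G.LocallyFinite) (x : V) : Finset V :=
  @SimpleGraph.neighborFinset V G x (hlf x)

/-- `G` is `(g,o)`-growing: every vertex `x` (say at distance `r` from `o`) has at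
    least `g` more neighbours in level `r+1` than in the ball of radius `r`. -/
def IsGrowing (G : SimpleGraph V) (hlf : G.LocallyFinite) (g : ℕ) (o : V) : Prop :=
  ∀ x : V,
    ((nbr G hlf x).filter fun z => G.dist o z ≤ G.dist o x).card + g ≤
      ((nbr G hlf x).filter fun z => G.dist o z = G.dist o x + 1).card

variable [DecidableEq V]

/-- External vertex boundary of a finite vertex set. -/
def vbd (G : SimpleGraph V) (hlf : G.LocallyFinite) (A : Finset V) : Finset V :=
  A.biUnion (fun a => nbr G hlf a) \ A

/-- Closure `A ∪ ∂_V A` of a finite vertex set. -/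
def cl (G : SimpleGraph V) (hlf : G.LocallyFinite) (A : Finset V) : Finset V :=
  A ∪ vbd G hlf A

/-- Ising Hamiltonian (zero field) with boundary: `Σ_{(x,y) ∈ E(A ∪ ∂_V A)} σ_x σ_y`,
    the sum over edges with both endpoints in `A ∪ ∂_V A` (each edge counted once). -/
def energyB (G : SimpleGraph V) (hlf : G.LocallyFinite) (A : Finset V) (σ : V → Bool) : ℝ :=
  (1 / 2) * ∑ x ∈ cl G hlf A, ∑ y ∈ (cl G hlf A).filter (fun y => G.Adj x y),
    spin (σ x) * spin (σ y)

/-- Free-boundary Ising Hamiltonian: `Σ_{(x,y) ∈ E(A)} σ_x σ_y`,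
    the sum over edges with both endpoints in `A` (each edge counted once). -/
def energyF (G : SimpleGraph V) (A : Finset V) (σ : V → Bool) : ℝ :=
  (1 / 2) * ∑ x ∈ A, ∑ y ∈ A.filter (fun y => G.Adj x y), spin (σ x) * spin (σ y)

/-- The configuration equal to `p` on `A` and to `η` off `A`. -/
def patch (A : Finset V) (η : V → Bool) (p : ∀ a ∈ A, Bool) : V → Bool :=
  fun v => if h : v ∈ A then p v h else η v

/-- Unnormalised Gibbs sum over configurations agreeing with `η` off `A`,
    with energy functional `E` (which should already include the factor `β`). -/
def wsum (E : (V → Bool) → ℝ) (A : Finset V) (η : V → Bool) (f : (V → Bool) → ℝ) : ℝ :=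
  ∑ p ∈ A.pi (fun _ => (Finset.univ : Finset Bool)),
    Real.exp (E (patch A η p)) * f (patch A η p)

/-- Gibbs expectation of `f` for the measure on region `A` with boundary condition `η`. -/
def gExp (E : (V → Bool) → ℝ) (A : Finset V) (η : V → Bool) (f : (V → Bool) → ℝ) : ℝ :=
  wsum E A η f / wsum E A η (fun _ => 1)

/-- Gibbs probability of an event. -/
def gProb (E : (V → Bool) → ℝ) (A : Finset V) (η : V → Bool) (P : (V → Bool) → Prop) : ℝ :=
  gExp E A η (fun σ => if P σ then 1 else 0)

/-- Gibbs variance of `f`. -/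
def gVar (E : (V → Bool) → ℝ) (A : Finset V) (η : V → Bool) (f : (V → Bool) → ℝ) : ℝ :=
  gExp E A η (fun σ => f σ ^ 2) - gExp E A η f ^ 2

/-- Dirichlet form of the heat-bath Glauber dynamics:
    `D(f) = Σ_{x ∈ A} μ(Var_x(f))`, where `Var_x(f)(σ)` is the variance of `f`
    under the one-site conditional Gibbs measure at `x` given `σ` elsewhere. -/
def dirich (E : (V → Bool) → ℝ) (A : Finset V) (η : V → Bool) (f : (V → Bool) → ℝ) : ℝ :=
  ∑ x ∈ A, gExp E A η (fun σ => gVar E {x} σ f)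

/-- Spectral gap `c_gap(μ) = inf { D(f)/Var(f) : Var(f) ≠ 0 }`. -/
def cgap (E : (V → Bool) → ℝ) (A : Finset V) (η : V → Bool) : ℝ :=
  sInf {r : ℝ | ∃ f : (V → Bool) → ℝ, gVar E A η f ≠ 0 ∧ r = dirich E A η f / gVar E A η f}

/-- The edge boundary of `C`, encoded as ordered pairs `(u,v)` with `u ∈ C`,
    `v ∉ C` and `u ~ v`; these pairs are in bijection with the boundary edges. -/
def obd (G : SimpleGraph V) (hlf : G.LocallyFinite) (C : Finset V) : Finset (V × V) :=
  (C ×ˢ C.biUnion (fun c => nbr G hlf c)).filter (fun p => G.Adj p.1 p.2 ∧ p.2 ∉ C)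

end IsingGlauber

open IsingGlauber

/-!
Peierls argument. Call the `-` cluster of `x` the set of vertices joined to `x` by a path of
`-` spins in `U`. On the event, the path from `y` can leave this cluster only at `y`, so the
cluster has at least `ℓ = d(x, y)` vertices.

Flipping a cluster `C` raises `Σ σ_x σ_y` by at least `2g|C|`. By growth, each vertex of `C` has
at least `g` more edges going one level out than other edges. Edges inside `C` cancel in pairs.
The outward neighbours of `C` carry `+`: inside `U` by maximality of the cluster, and outside `U`
because of the boundary condition. Hence `μ(cluster = C) ≤ e^{-2gβ|C|}`.

To count the clusters, use Bernoulli site percolation of density `1/(Δ+1)`. This gives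
`Σ_C e^{-δ|C|} ≤ 1` over connected sets `C ∋ x`. Since `2gβ = δ + β'`, the probability is at most
`e^{-β'ℓ}`, which is below the stated bound.
-/

open Finset SimpleGraph

namespace IsingGlauber

variable {V : Type*}

lemma mem_nbr {G : SimpleGraph V} {hlf : G.LocallyFinite} {u v : V} :
    v ∈ nbr G hlf u ↔ G.Adj u v := by
  simp [nbr]

lemma spin_not (b : Bool) : spin (!b) = -spin b := by cases b <;> simp [spin]

section Cluster

variable (G : SimpleGraph V)

def cluster (A : Finset V) (x : V) : Finset V :=
  A.filter fun v => ∃ w : G.Walk x v, ∀ u ∈ w.support, u ∈ A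

variable {G} {A B C : Finset V} {x u v : V}

lemma mem_cluster : v ∈ cluster G A x ↔ ∃ w : G.Walk x v, ∀ u ∈ w.support, u ∈ A :=
  ⟨fun h => (mem_filter.mp h).2, fun ⟨w, hw⟩ => mem_filter.mpr ⟨hw v w.end_mem_support, w, hw⟩⟩

lemma cluster_subset : cluster G A x ⊆ A := filter_subset _ _

lemma cluster_mono (h : A ⊆ B) : cluster G A x ⊆ cluster G B x := fun v hv => by
  obtain ⟨w, hw⟩ := mem_cluster.mp hv
  exact mem_cluster.mpr ⟨w, fun u hu => h (hw u hu)⟩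

lemma self_mem_cluster (hx : x ∈ A) : x ∈ cluster G A x :=
  mem_cluster.mpr ⟨.nil, by simpa using hx⟩

lemma mem_cluster_of_adj (hu : u ∈ cluster G A x) (huv : G.Adj u v) (hv : v ∈ A) :
    v ∈ cluster G A x := by
  obtain ⟨w, hw⟩ := mem_cluster.mp hu
  refine mem_cluster.mpr ⟨w.concat huv, fun z hz => ?_⟩
  rcases List.mem_append.mp ((w.support_concat huv) ▸ hz) with hz | hz
  · exact hw z hz
  · exact List.mem_singleton.mp hz ▸ hv

lemma cluster_eq_of_forall_adj (hxC : x ∈ C) (hC : cluster G C x = C) (hCA : C ⊆ A)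
    (hbd : ∀ u ∈ C, ∀ v, G.Adj u v → v ∉ C → v ∉ A) : cluster G A x = C := by
  refine Subset.antisymm (fun v hv => ?_) (hC ▸ cluster_mono hCA)
  by_contra hvC
  obtain ⟨w, hw⟩ := mem_cluster.mp hv
  obtain ⟨d, hd, hd₁, hd₂⟩ := w.exists_boundary_dart (C : Set V) hxC hvC
  exact hbd _ hd₁ _ d.adj hd₂ (hw _ (w.dart_snd_mem_support_of_mem_darts hd))

variable [DecidableEq V]

lemma exists_walk_support_subset_cluster (hv : v ∈ cluster G A x) :
    ∃ w : G.Walk x v, ∀ u ∈ w.support, u ∈ cluster G A x := by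
  obtain ⟨w, hw⟩ := mem_cluster.mp hv
  exact ⟨w, fun u hu => mem_cluster.mpr
    ⟨w.takeUntil u hu, fun z hz => hw z (w.support_takeUntil_subset_support hu hz)⟩⟩

lemma cluster_cluster : cluster G (cluster G A x) x = cluster G A x :=
  Subset.antisymm cluster_subset fun _ hv =>
    mem_cluster.mpr (exists_walk_support_subset_cluster hv)

lemma dist_lt_card_of_support_subset (w : G.Walk u v) (hw : ∀ z ∈ w.support, z ∈ C) :
    G.dist u v < C.card := by
  have hpath := w.bypass_isPath
  calc G.dist u v ≤ w.bypass.length := dist_le _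
    _ < w.bypass.support.length := by rw [Walk.length_support]; omega
    _ = w.bypass.support.toFinset.card := (List.toFinset_card_of_nodup hpath.support_nodup).symm
    _ ≤ C.card := card_le_card fun z hz =>
        hw z (w.support_bypass_subset_support (List.mem_toFinset.mp hz))

lemma dist_le_card_cluster {y : V} (hx : x ∈ A) (hy : y ∉ A) (w : G.Walk y x)
    (hw : ∀ z ∈ w.support, z ∈ insert y A) : G.dist x y ≤ #(cluster G A x) := by
  have hyS : y ∉ cluster G A x := fun h => hy (cluster_subset h)
  obtain ⟨d, hd, hd₁, hd₂⟩ :=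
    w.reverse.exists_boundary_dart (cluster G A x : Set V) (self_mem_cluster hx) hyS
  have hdy : d.snd = y := by
    have := hw _ (by simpa using w.reverse.dart_snd_mem_support_of_mem_darts hd)
    rcases mem_insert.mp this with h | h
    · exact h
    · exact absurd (mem_cluster_of_adj hd₁ d.adj h) hd₂
  obtain ⟨p, hp⟩ := exists_walk_support_subset_cluster hd₁
  have := dist_lt_card_of_support_subset (C := insert y (cluster G A x))
    (p.concat (hdy ▸ d.adj)) fun z hz => by
      rcases List.mem_append.mp ((p.support_concat _) ▸ hz) with hz | hz
      · exact mem_insert_of_mem (hp z hz)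
      · exact List.mem_singleton.mp hz ▸ mem_insert_self _ _
  rw [card_insert_of_notMem hyS] at this
  omega

end Cluster

lemma exp_neg_one_le_div_pow (Δ : ℕ) : Real.exp (-1) ≤ ((Δ : ℝ) / (Δ + 1)) ^ Δ := by
  rcases Nat.eq_zero_or_pos Δ with rfl | hΔ
  · simp
  have hΔ' : (0 : ℝ) < Δ := Nat.cast_pos.mpr hΔ
  have hpow : (1 / (Δ : ℝ) + 1) ^ Δ ≤ Real.exp 1 := by
    calc (1 / (Δ : ℝ) + 1) ^ Δ ≤ Real.exp (1 / Δ) ^ Δ :=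
          pow_le_pow_left₀ (by positivity) (Real.add_one_le_exp _) _
      _ = Real.exp 1 := by rw [← Real.exp_nat_mul, mul_one_div_cancel hΔ'.ne']
  have hinv : ((Δ : ℝ) / (Δ + 1)) ^ Δ = ((1 / (Δ : ℝ) + 1) ^ Δ)⁻¹ := by
    rw [← inv_pow]
    congr 1
    field_simp
    ring
  rw [hinv, Real.exp_neg]
  exact inv_anti₀ (by positivity) hpow

lemma exp_neg_mul_le_pow_mul_pow (Δ k : ℕ) :
    Real.exp (-(1 + Real.log (Δ + 1)) * k) ≤
      (1 / (Δ + 1 : ℝ)) ^ k * ((Δ : ℝ) / (Δ + 1)) ^ (Δ * k) := by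
  have hbase : Real.exp (-(1 + Real.log (Δ + 1))) ≤ 1 / (Δ + 1 : ℝ) * ((Δ : ℝ) / (Δ + 1)) ^ Δ := by
    rw [neg_add, Real.exp_add, Real.exp_neg (Real.log _), Real.exp_log (by positivity),
      mul_comm, ← one_div]
    exact mul_le_mul_of_nonneg_left (exp_neg_one_le_div_pow Δ) (by positivity)
  rw [pow_mul, ← mul_pow, mul_comm _ (k : ℝ), Real.exp_nat_mul]
  exact pow_le_pow_left₀ (Real.exp_pos _).le hbase k

section Percolation

variable {U : Finset V} {p : ℝ}

def bernoulliWeight (p : ℝ) (ω : U → Bool) : ℝ := ∏ a, if ω a then p else 1 - p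

def openSet (ω : U → Bool) : Finset V := (univ.filter fun a => ω a).map (.subtype _)

lemma mem_openSet {ω : U → Bool} {v : V} : v ∈ openSet ω ↔ ∃ h : v ∈ U, ω ⟨v, h⟩ := by
  simp [openSet]

lemma bernoulliWeight_nonneg (hp : 0 ≤ p) (hp₁ : p ≤ 1) (ω : U → Bool) :
    0 ≤ bernoulliWeight p ω :=
  prod_nonneg fun a _ => by split_ifs <;> linarith

variable [DecidableEq V] {G : SimpleGraph V} {hlf : G.LocallyFinite} {Δ : ℕ} {C : Finset V}
  {x : V}

lemma card_vbd_le (hdeg : ∀ v, (nbr G hlf v).card ≤ Δ) (C : Finset V) :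
    #(vbd G hlf C) ≤ Δ * #C :=
  calc #(vbd G hlf C) ≤ #(C.biUnion (nbr G hlf)) := card_le_card sdiff_subset
    _ ≤ Δ * #C := by rw [mul_comm]; exact card_biUnion_le_card_mul _ _ _ fun v _ => hdeg v

lemma cluster_eq_of_disjoint_vbd {A : Finset V} (hxC : x ∈ C) (hC : cluster G C x = C)
    (hCA : C ⊆ A) (hA : Disjoint A (vbd G hlf C)) : cluster G A x = C :=
  cluster_eq_of_forall_adj hxC hC hCA fun u hu _ huv hvC hvA =>
    disjoint_left.mp hA hvA (mem_sdiff.mpr ⟨mem_biUnion.mpr ⟨u, hu, mem_nbr.mpr huv⟩, hvC⟩)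

lemma sum_bernoulliWeight (p : ℝ) (U : Finset V) : ∑ ω : U → Bool, bernoulliWeight p ω = 1 := by
  calc ∑ ω : U → Bool, bernoulliWeight p ω = ∏ _a : U, ∑ b : Bool, if b then p else 1 - p :=
        (Fintype.prod_sum fun (_ : U) (b : Bool) => if b then p else 1 - p).symm
    _ = 1 := by simp

/-- Expanding the product over `U` produces the total weight of the configurations that are open
on `C` and closed on `∂C`; for all of them the open cluster of `x` is `C`. -/
lemma prod_le_sum_bernoulliWeight (hp : 0 ≤ p) (hp₁ : p ≤ 1) (hxC : x ∈ C)
    (hC : cluster G C x = C) (hCU : C ⊆ U) :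
    ∏ v ∈ U, (if v ∈ C then p else if v ∈ vbd G hlf C then 1 - p else 1) ≤
      ∑ ω : U → Bool, bernoulliWeight p ω * if cluster G (openSet ω) x = C then 1 else 0 := by
  set allowed : U → Bool → ℝ := fun a b => if (a : V) ∈ C then (if b then 1 else 0)
    else if (a : V) ∈ vbd G hlf C then (if b then 0 else 1) else 1
  have hfactor : ∀ a : U, (if (a : V) ∈ C then p else if (a : V) ∈ vbd G hlf C then 1 - p else 1)
      = ∑ b, (if b then p else 1 - p) * allowed a b := fun a => by
    by_cases haC : (a : V) ∈ C <;> by_cases hab : (a : V) ∈ vbd G hlf C <;> simp [allowed, haC, hab]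
  rw [← prod_coe_sort, prod_congr rfl fun a _ => hfactor a, Fintype.prod_sum]
  refine sum_le_sum fun ω _ => ?_
  rw [prod_mul_distrib]
  by_cases hcl : cluster G (openSet ω) x = C
  · rw [if_pos hcl]
    refine mul_le_mul_of_nonneg_left (prod_le_one (fun a _ => ?_) fun a _ => ?_)
      (bernoulliWeight_nonneg hp hp₁ ω) <;> simp only [allowed] <;> split_ifs <;> norm_num
  · rw [if_neg hcl, mul_zero]
    obtain ⟨a, ha⟩ : ∃ a, allowed a (ω a) = 0 := by
      by_contra! hne
      refine hcl (cluster_eq_of_disjoint_vbd (hlf := hlf) hxC hC (fun v hv => ?_)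
        (disjoint_left.mpr ?_))
      · have := hne ⟨v, hCU hv⟩
        simp only [allowed, hv, if_true] at this
        exact mem_openSet.mpr ⟨hCU hv, by simpa using this⟩
      · rintro v hvω hvbd
        obtain ⟨hvU, hω⟩ := mem_openSet.mp hvω
        have := hne ⟨v, hvU⟩
        simp [allowed, hvbd, (mem_sdiff.mp hvbd).2, hω] at this
    rw [prod_eq_zero (f := fun a => allowed a (ω a)) (mem_univ a) ha, mul_zero]

lemma pow_mul_pow_le_prod (hp : 0 ≤ p) (hp₁ : p ≤ 1) (hdeg : ∀ v, (nbr G hlf v).card ≤ Δ)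
    (hCU : C ⊆ U) :
    p ^ #C * (1 - p) ^ (Δ * #C) ≤
      ∏ v ∈ U, (if v ∈ C then p else if v ∈ vbd G hlf C then 1 - p else 1) := by
  rw [prod_ite, prod_const, prod_ite, prod_const, prod_const_one, mul_one, filter_mem_eq_inter,
    inter_eq_right.mpr hCU]
  refine mul_le_mul_of_nonneg_left (pow_le_pow_of_le_one (by linarith) (by linarith) ?_)
    (by positivity)
  exact (card_le_card fun v hv => (mem_filter.mp hv).2).trans (card_vbd_le hdeg C)

lemma sum_exp_neg_mul_card_le_one (hdeg : ∀ v, (nbr G hlf v).card ≤ Δ) (x : V)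
    (𝒞 : Finset (Finset V)) (h𝒞 : ∀ C ∈ 𝒞, x ∈ C ∧ cluster G C x = C) :
    ∑ C ∈ 𝒞, Real.exp (-(1 + Real.log (Δ + 1)) * #C) ≤ 1 := by
  set U := 𝒞.biUnion id
  set p : ℝ := 1 / (Δ + 1)
  have hp : 0 ≤ p := by positivity
  have hp₁ : p ≤ 1 := div_le_one_of_le₀ (by simp) (by positivity)
  have hp' : (Δ : ℝ) / (Δ + 1) = 1 - p := by
    simp only [p]
    field_simp
    ring
  calc ∑ C ∈ 𝒞, Real.exp (-(1 + Real.log (Δ + 1)) * #C)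
      ≤ ∑ C ∈ 𝒞, ∑ ω : U → Bool, bernoulliWeight p ω *
          if cluster G (openSet ω) x = C then 1 else 0 := sum_le_sum fun C hC => by
        obtain ⟨hxC, hconn⟩ := h𝒞 C hC
        have hCU : C ⊆ U := subset_biUnion_of_mem id hC
        calc Real.exp (-(1 + Real.log (Δ + 1)) * #C) ≤ p ^ #C * (1 - p) ^ (Δ * #C) :=
              hp' ▸ exp_neg_mul_le_pow_mul_pow Δ #C
          _ ≤ _ := pow_mul_pow_le_prod hp hp₁ hdeg hCU
          _ ≤ _ := prod_le_sum_bernoulliWeight hp hp₁ hxC hconn hCU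
    _ = ∑ ω : U → Bool, bernoulliWeight p ω * ∑ C ∈ 𝒞,
          if cluster G (openSet ω) x = C then 1 else 0 := by
        rw [sum_comm]
        simp only [mul_sum]
    _ ≤ ∑ ω : U → Bool, bernoulliWeight p ω := sum_le_sum fun ω _ => mul_le_of_le_one_right
        (bernoulliWeight_nonneg hp hp₁ ω) (by rw [sum_ite_eq]; split_ifs <;> norm_num)
    _ = 1 := sum_bernoulliWeight p U

lemma sum_exp_neg_mul_card_le_of_le_card (hdeg : ∀ v, (nbr G hlf v).card ≤ Δ) {β' : ℝ}
    (hβ' : 0 ≤ β') (x : V) (ℓ : ℕ) (𝒞 : Finset (Finset V))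
    (h𝒞 : ∀ C ∈ 𝒞, x ∈ C ∧ cluster G C x = C ∧ ℓ ≤ #C) :
    ∑ C ∈ 𝒞, Real.exp (-((1 + Real.log (Δ + 1) + β') * #C)) ≤ Real.exp (-β' * ℓ) :=
  calc ∑ C ∈ 𝒞, Real.exp (-((1 + Real.log (Δ + 1) + β') * #C))
      ≤ ∑ C ∈ 𝒞, Real.exp (-(1 + Real.log (Δ + 1)) * #C) * Real.exp (-β' * ℓ) :=
        sum_le_sum fun C hC => by
          have hℓ : (ℓ : ℝ) ≤ #C := by exact_mod_cast (h𝒞 C hC).2.2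
          rw [← Real.exp_add]
          exact Real.exp_le_exp.mpr (by nlinarith)
    _ ≤ Real.exp (-β' * ℓ) := by
        rw [← sum_mul]
        exact mul_le_of_le_one_left (Real.exp_pos _).le (sum_exp_neg_mul_card_le_one hdeg x 𝒞
          fun C hC => ⟨(h𝒞 C hC).1, (h𝒞 C hC).2.1⟩)

end Percolation

section Energy

lemma sum_sum_nonpos_of_add_swap_nonpos {α : Type*} (s : Finset α) (f : α → α → ℝ)
    (h : ∀ a ∈ s, ∀ b ∈ s, f a b + f b a ≤ 0) : ∑ a ∈ s, ∑ b ∈ s, f a b ≤ 0 := by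
  have : 2 * ∑ a ∈ s, ∑ b ∈ s, f a b = ∑ a ∈ s, ∑ b ∈ s, (f a b + f b a) := by
    rw [two_mul]
    nth_rewrite 2 [sum_comm]
    simp only [sum_add_distrib]
  linarith [sum_nonpos fun a ha => sum_nonpos fun b hb => h a ha b hb]

variable {G : SimpleGraph V} {hlf : G.LocallyFinite} {g : ℕ} {o : V}

lemma IsGrowing.le_sum_sign (hgrow : IsGrowing G hlf g o) (u : V) :
    (g : ℝ) ≤ ∑ v ∈ nbr G hlf u, if G.dist o v = G.dist o u + 1 then 1 else -1 := by
  have hin : ((nbr G hlf u).filter fun v => ¬G.dist o v = G.dist o u + 1) ⊆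
      (nbr G hlf u).filter fun v => G.dist o v ≤ G.dist o u := by
    intro v hv
    simp only [mem_filter] at hv ⊢
    refine ⟨hv.1, ?_⟩
    rcases (mem_nbr.mp hv.1).diff_dist_adj (u := o) with h | h | h <;> omega
  have h₁ : (((nbr G hlf u).filter fun v => ¬G.dist o v = G.dist o u + 1).card : ℝ) ≤
      ((nbr G hlf u).filter fun v => G.dist o v ≤ G.dist o u).card := by
    exact_mod_cast card_le_card hin
  have h₂ : (((nbr G hlf u).filter fun v => G.dist o v ≤ G.dist o u).card : ℝ) + g ≤
      ((nbr G hlf u).filter fun v => G.dist o v = G.dist o u + 1).card := by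
    exact_mod_cast hgrow u
  rw [sum_ite, sum_const, sum_const]
  simp only [nsmul_eq_mul, mul_one, mul_neg]
  linarith

variable [DecidableEq V] {U C : Finset V}

def flipOn (C : Finset V) (σ : V → Bool) : V → Bool := fun v => if v ∈ C then !σ v else σ v

lemma energyB_flipOn_sub (hCU : C ⊆ U) (σ : V → Bool) :
    energyB G hlf U (flipOn C σ) - energyB G hlf U σ =
      -2 * ∑ a ∈ C, ∑ b ∈ nbr G hlf a \ C, spin (σ a) * spin (σ b) := by
  set W := cl G hlf U
  set s : V → ℝ := fun v => spin (σ v)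
  set F : V → V → ℝ := fun a b => if G.Adj a b ∧ a ∈ C ∧ b ∉ C then s a * s b else 0
  have hterm : ∀ a b, (if G.Adj a b then
      spin (flipOn C σ a) * spin (flipOn C σ b) - s a * s b else 0) = -2 * (F a b + F b a) := by
    intro a b
    by_cases hab : G.Adj a b <;> by_cases ha : a ∈ C <;> by_cases hb : b ∈ C <;>
      simp [F, s, flipOn, G.adj_comm b a, hab, ha, hb, spin_not] <;> ring
  have hF : ∑ a ∈ W, ∑ b ∈ W, F a b = ∑ a ∈ C, ∑ b ∈ nbr G hlf a \ C, s a * s b := by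
    have hCW : C ⊆ W := hCU.trans subset_union_left
    rw [← sum_subset hCW fun a _ ha => sum_eq_zero fun b _ => by simp [F, ha]]
    refine sum_congr rfl fun a ha => ?_
    have hNW : nbr G hlf a \ C ⊆ W := fun b hb => by
      obtain ⟨hab, hbC⟩ := mem_sdiff.mp hb
      by_cases hbU : b ∈ U
      · exact mem_union_left _ hbU
      · exact mem_union_right _ (mem_sdiff.mpr ⟨mem_biUnion.mpr ⟨a, hCU ha, hab⟩, hbU⟩)
    rw [← sum_subset hNW fun b _ hb => by simp_all [F, mem_nbr]]
    exact sum_congr rfl fun b hb => by simp_all [F, mem_nbr]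
  calc energyB G hlf U (flipOn C σ) - energyB G hlf U σ
      = 1 / 2 * ∑ a ∈ W, ∑ b ∈ W, -2 * (F a b + F b a) := by
        simp only [energyB, ← mul_sub, ← sum_sub_distrib, sum_filter, ← hterm]
        congr 1
        refine sum_congr rfl fun a _ => sum_congr rfl fun b _ => ?_
        split_ifs <;> simp [s]
    _ = -(∑ a ∈ W, ∑ b ∈ W, F a b + ∑ a ∈ W, ∑ b ∈ W, F b a) := by
        simp only [← mul_sum, sum_add_distrib]; ring
    _ = _ := by rw [sum_comm (f := fun a b => F b a), hF]; ring

lemma card_mul_le_sum_spin (hgrow : IsGrowing G hlf g o) (σ : V → Bool)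
    (hplus : ∀ u ∈ C, ∀ v ∈ nbr G hlf u \ C, G.dist o v = G.dist o u + 1 → σ v = true) :
    (g : ℝ) * C.card ≤ ∑ u ∈ C, ∑ v ∈ nbr G hlf u \ C, spin (σ v) := by
  set a : V → V → ℝ := fun u v => if G.dist o v = G.dist o u + 1 then 1 else -1
  have hinside : ∑ u ∈ C, ∑ v ∈ nbr G hlf u ∩ C, a u v ≤ 0 := by
    have hfilter : ∀ u, nbr G hlf u ∩ C = C.filter (G.Adj u) := fun u => by
      ext v; simp [mem_nbr, and_comm]
    simp only [hfilter, sum_filter]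
    refine sum_sum_nonpos_of_add_swap_nonpos C _ fun u _ v _ => ?_
    by_cases huv : G.Adj u v
    · simp only [huv, huv.symm, if_true, a]
      split_ifs <;> (try omega) <;> norm_num
    · simp [huv, G.adj_comm v u]
  have houtside : ∀ u ∈ C, ∑ v ∈ nbr G hlf u \ C, a u v ≤ ∑ v ∈ nbr G hlf u \ C, spin (σ v) :=
    fun u hu => sum_le_sum fun v hv => by
      by_cases hout : G.dist o v = G.dist o u + 1
      · simp [a, hout, hplus u hu v hv hout, spin]
      · cases σ v <;> simp [a, hout, spin]
  calc (g : ℝ) * C.card = ∑ _u ∈ C, (g : ℝ) := by rw [sum_const, nsmul_eq_mul, mul_comm]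
    _ ≤ ∑ u ∈ C, ∑ v ∈ nbr G hlf u, a u v := sum_le_sum fun u _ => hgrow.le_sum_sign u
    _ = ∑ u ∈ C, ∑ v ∈ nbr G hlf u ∩ C, a u v + ∑ u ∈ C, ∑ v ∈ nbr G hlf u \ C, a u v := by
        rw [← sum_add_distrib]
        exact sum_congr rfl fun u _ => (sum_inter_add_sum_sdiff _ _ _).symm
    _ ≤ 0 + ∑ u ∈ C, ∑ v ∈ nbr G hlf u \ C, spin (σ v) := add_le_add hinside (sum_le_sum houtside)
    _ = _ := zero_add _

end Energy

variable [DecidableEq V]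

section Gibbs

variable {E : (V → Bool) → ℝ} {U : Finset V} {η : V → Bool}

lemma wsum_one_pos : 0 < wsum E U η fun _ => 1 :=
  sum_pos (fun _ _ => by positivity) ⟨fun _ _ => true, mem_pi.mpr fun _ _ => mem_univ _⟩

lemma wsum_mono {f f' : (V → Bool) → ℝ} (h : ∀ σ, f σ ≤ f' σ) : wsum E U η f ≤ wsum E U η f' :=
  sum_le_sum fun _ _ => mul_le_mul_of_nonneg_left (h _) (Real.exp_pos _).le

lemma wsum_sum {ι : Type*} (s : Finset ι) (f : ι → (V → Bool) → ℝ) :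
    wsum E U η (fun σ => ∑ i ∈ s, f i σ) = ∑ i ∈ s, wsum E U η (f i) := by
  simp only [wsum, mul_sum]
  exact sum_comm

lemma gProb_le_sum {ι : Type*} [DecidableEq ι] {P : (V → Bool) → Prop} (f : (V → Bool) → ι)
    (s : Finset ι) (a : ι → ℝ) (hf : ∀ σ, P σ → f σ ∈ s)
    (ha : ∀ i ∈ s, wsum E U η (fun σ => if f σ = i then 1 else 0) ≤ a i * wsum E U η fun _ => 1) :
    gProb E U η P ≤ ∑ i ∈ s, a i := by
  rw [gProb, gExp, div_le_iff₀ wsum_one_pos, sum_mul]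
  calc wsum E U η (fun σ => if P σ then 1 else 0)
      ≤ wsum E U η (fun σ => ∑ i ∈ s, if f σ = i then 1 else 0) := wsum_mono fun σ => by
        by_cases hP : P σ
        · simp [hP, hf σ hP]
        · simp only [hP, if_false]; positivity
    _ = _ := wsum_sum s _
    _ ≤ _ := sum_le_sum ha

-- `flipOn C` permutes the configurations that agree with `η` off `U`.
lemma wsum_ite_le_of_flipOn {C : Finset V} {P : (V → Bool) → Prop} [DecidablePred P] {c : ℝ}
    (hCU : C ⊆ U)
    (h : ∀ σ, (∀ v ∉ U, σ v = η v) → P σ → E σ + c ≤ E (flipOn C σ)) :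
    wsum E U η (fun σ => if P σ then 1 else 0) ≤ Real.exp (-c) * wsum E U η fun _ => 1 := by
  set φ : (∀ a ∈ U, Bool) → ∀ a ∈ U, Bool := fun p a ha => if a ∈ C then !p a ha else p a ha
  have hφφ : ∀ p, φ (φ p) = p := fun p => by
    funext a ha
    by_cases haC : a ∈ C <;> simp [φ, haC]
  have hpatch : ∀ p, patch U η (φ p) = flipOn C (patch U η p) := fun p => by
    funext v
    by_cases hv : v ∈ U
    · by_cases hvC : v ∈ C <;> simp [φ, patch, flipOn, hv, hvC]
    · have hvC : v ∉ C := fun h => hv (hCU h)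
      simp [patch, flipOn, hv, hvC]
  have hmem : ∀ p, φ p ∈ U.pi fun _ => (univ : Finset Bool) := fun p =>
    mem_pi.mpr fun _ _ => mem_univ _
  unfold wsum
  calc ∑ p ∈ U.pi (fun _ => univ), Real.exp (E (patch U η p)) * (if P (patch U η p) then 1 else 0)
      ≤ ∑ p ∈ U.pi (fun _ => univ), Real.exp (-c) * Real.exp (E (patch U η (φ p))) :=
        sum_le_sum fun p _ => by
          split_ifs with hP
          · rw [mul_one, ← Real.exp_add, hpatch]
            exact Real.exp_le_exp.mpr (by linarith [h (patch U η p) (fun v hv => dif_neg hv) hP])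
          · rw [mul_zero]; positivity
    _ = _ := by
        rw [← mul_sum]
        congr 1
        exact sum_nbij' φ φ (fun p _ => hmem p) (fun p _ => hmem p) (fun p _ => hφφ p)
          (fun p _ => hφφ p) fun p _ => (mul_one _).symm

end Gibbs

variable {G : SimpleGraph V} {hlf : G.LocallyFinite} {g : ℕ} {o : V} {U C : Finset V}
  {η : V → Bool} {β : ℝ}

lemma wsum_cluster_eq_le (hβ : 0 ≤ β) (hgrow : IsGrowing G hlf g o) (hCU : C ⊆ U)
    (hη : ∀ u ∈ C, ∀ v ∉ U, G.Adj u v → G.dist o v = G.dist o u + 1 → η v = true) (x : V) :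
    wsum (fun σ => β * energyB G hlf U σ) U η
        (fun σ => if cluster G (U.filter (σ · = false)) x = C then 1 else 0) ≤
      Real.exp (-(2 * g * β * C.card)) * wsum (fun σ => β * energyB G hlf U σ) U η fun _ => 1 := by
  refine wsum_ite_le_of_flipOn hCU fun σ hσU hcl => ?_
  have hminus : ∀ u ∈ C, σ u = false := fun u hu => by
    rw [← hcl] at hu
    exact (mem_filter.mp (cluster_subset hu)).2
  have hplus : ∀ u ∈ C, ∀ v ∈ nbr G hlf u \ C, G.dist o v = G.dist o u + 1 → σ v = true := by
    intro u hu v hv hdist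
    obtain ⟨hadj, hvC⟩ : G.Adj u v ∧ v ∉ C := by simpa [mem_nbr] using hv
    by_cases hvU : v ∈ U
    · by_contra hσv
      exact hvC (hcl ▸ mem_cluster_of_adj (hcl.symm ▸ hu) hadj (by simp [hvU, hσv]))
    · rw [hσU v hvU]
      exact hη u hu v hvU hadj hdist
  have hflip := energyB_flipOn_sub (hlf := hlf) hCU σ
  have hsum : ∑ a ∈ C, ∑ b ∈ nbr G hlf a \ C, spin (σ a) * spin (σ b) =
      -∑ a ∈ C, ∑ b ∈ nbr G hlf a \ C, spin (σ b) := by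
    rw [← sum_neg_distrib]
    exact sum_congr rfl fun a ha => by
      rw [← mul_sum, hminus a ha, spin, if_neg Bool.false_ne_true, neg_one_mul]
  have hgain : (g : ℝ) * C.card ≤ ∑ u ∈ C, ∑ v ∈ nbr G hlf u \ C, spin (σ v) :=
    card_mul_le_sum_spin hgrow σ hplus
  nlinarith [mul_le_mul_of_nonneg_left hgain hβ]

end IsingGlauber

theorem statement11_general {V : Type*} [DecidableEq V]
    (G : SimpleGraph V) (hlf : G.LocallyFinite)
    (g Δ : ℕ) (o : V)
    (hgrow : IsGrowing G hlf g o)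
    (hΔ : ∀ v : V, (nbr G hlf v).card ≤ Δ)
    (δ : ℝ) (hδ : δ = 1 + Real.log ((Δ : ℝ) + 1))
    (β β' : ℝ) (hβ' : β' = 2 * (g : ℝ) * β - δ) (hpos : 0 < β')
    (i : ℕ) (Bm : Finset V)
    (S : Finset V) (hS : ∀ v ∈ S, G.dist o v = i)
    (U : Finset V) (hU : U = Bm.filter (fun v => i + 1 ≤ G.dist o v) ∪ S)
    (x : V) (hx : x ∈ S)
    (y : V) (hy : G.dist o y = i) (hyS : y ∉ S) :
    gProb (fun σ => β * energyB G hlf U σ) U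
        (fun v => if G.dist o v ≤ i then false else true)
        (fun σ => ∃ w : G.Walk y x, ∀ v ∈ w.support, v ∈ insert y U ∧ (v ∈ U → σ v = false)) ≤
      Real.exp δ * Real.exp (-β' * (G.dist x y : ℝ)) / (1 - Real.exp (-β')) := by
  have hUi : ∀ u ∈ U, i ≤ G.dist o u := fun u hu => by
    rcases mem_union.mp (hU ▸ hu) with h | h
    · exact (Nat.le_succ i).trans (mem_filter.mp h).2
    · exact (hS u h).ge
  have hxU : x ∈ U := hU ▸ mem_union_right _ hx
  have hyU : y ∉ U := by simp [hU, hy, hyS]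
  have hδ0 : 0 ≤ δ := by
    rw [hδ]; linarith [Real.log_nonneg (by simp : (1 : ℝ) ≤ Δ + 1)]
  have hβ : 0 ≤ β := (pos_of_mul_pos_right (by linarith : 0 < 2 * (g : ℝ) * β) (by positivity)).le
  have hgβ : 2 * (g : ℝ) * β = 1 + Real.log (Δ + 1) + β' := by rw [← hδ]; linarith
  set 𝒞 := U.powerset.filter fun C => x ∈ C ∧ cluster G C x = C ∧ G.dist x y ≤ #C
  refine (gProb_le_sum (fun σ => cluster G (U.filter (σ · = false)) x) 𝒞
    (fun C => Real.exp (-(2 * g * β * #C))) ?_ ?_).trans ?_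
  · rintro σ ⟨w, hw⟩
    have hxA : x ∈ U.filter (σ · = false) := mem_filter.mpr ⟨hxU, (hw x w.end_mem_support).2 hxU⟩
    refine mem_filter.mpr ⟨mem_powerset.mpr (cluster_subset.trans (filter_subset _ _)),
      self_mem_cluster hxA, cluster_cluster, dist_le_card_cluster hxA
        (fun h => hyU (mem_filter.mp h).1) w fun z hz => ?_⟩
    obtain ⟨hzU, hzσ⟩ := hw z hz
    rcases mem_insert.mp hzU with rfl | hzU
    · exact mem_insert_self _ _
    · exact mem_insert_of_mem (mem_filter.mpr ⟨hzU, hzσ hzU⟩)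
  · intro C hC
    have hCU := mem_powerset.mp (mem_filter.mp hC).1
    refine wsum_cluster_eq_le hβ hgrow hCU (fun u hu v _ _ hdist => ?_) x
    simp only [if_neg (by linarith [hUi u (hCU hu)] : ¬G.dist o v ≤ i)]
  · have hq : 0 < 1 - Real.exp (-β') := by linarith [Real.exp_lt_one_iff.mpr (neg_neg_of_pos hpos)]
    simp only [hgβ]
    refine (sum_exp_neg_mul_card_le_of_le_card hΔ hpos.le x _ 𝒞 fun C hC =>
      (mem_filter.mp hC).2).trans ?_
    rw [le_div_iff₀ hq, mul_comm (Real.exp δ)]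
    nlinarith [Real.exp_pos (-β' * G.dist x y), Real.exp_pos (-β'), Real.one_le_exp hδ0]

/-- estimate (3.20) of the paper: under the minus boundary condition
on `B_i \ S` and plus on `∂_V B`, the probability that some path from `y` to `x` in
the subgraph induced on `U ∪ {y}` is all minus on its vertices in `U` is at most
`e^δ e^{-β'ℓ}/(1 - e^{-β'})`, where `ℓ = d(x,y) > 1`, `β' = 2gβ - δ > 0` and
`δ = 1 + log(Δ+1)`. -/
theorem statement11 {V : Type*} [DecidableEq V] [Infinite V]
    (G : SimpleGraph V) (hlf : G.LocallyFinite) (hconn : G.Connected)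
    (g Δ : ℕ) (hg : 1 ≤ g) (o : V)
    (hgrow : IsGrowing G hlf g o)
    (hΔ : ∀ v : V, (nbr G hlf v).card ≤ Δ)
    (δ : ℝ) (hδ : δ = 1 + Real.log ((Δ : ℝ) + 1))
    (β β' : ℝ) (hβ' : β' = 2 * (g : ℝ) * β - δ) (hpos : 0 < β')
    (m i : ℕ) (him : i ≤ m) (Bm : Finset V) (hBm : ∀ v : V, v ∈ Bm ↔ G.dist o v ≤ m)
    (S : Finset V) (hS : ∀ v ∈ S, G.dist o v = i)
    (U : Finset V) (hU : U = Bm.filter (fun v => i + 1 ≤ G.dist o v) ∪ S)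
    (x : V) (hx : x ∈ S)
    (y : V) (hy : G.dist o y = i) (hyS : y ∉ S) (hℓ : 1 < G.dist x y) :
    gProb (fun σ => β * energyB G hlf U σ) U
        (fun v => if G.dist o v ≤ i then false else true)
        (fun σ => ∃ w : G.Walk y x, ∀ v ∈ w.support, v ∈ insert y U ∧ (v ∈ U → σ v = false)) ≤
      Real.exp δ * Real.exp (-β' * (G.dist x y : ℝ)) / (1 - Real.exp (-β')) :=
  statement11_general G hlf g Δ o hgrow hΔ δ hδ β β' hβ' hpos i Bm S hS U hU x hx y hy hyS
end
end

section
/- Let G be an infinite (g,o)-growing graph with maximal degree Δ < ∞, fix i ∈ {0,…,m}, S ⊆ L_i, U = F_{i+1} ∪ S, τ ∈ Ω⁺, x ∈ S and y ∈ L_i \ S. Let τ^{y,+} and τ^{y,−} be the configurations agreeing with τ off y and having spin +1, respectively −1, at y, and let μ_U^{y,+}, μ_U^{y,−} be the corresponding Gibbs measures on U. Then μ_U^{y,+}(σ_x = +1) − μ_U^{y,−}(σ_x = +1) ≤ μ_U^{y,−}(A^c), where A^c is the event that there is a path in the subgraph induced on U ∪ {y} from y to x all of whose vertices lying in U carry spin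 −1. -/
/- Common framework: Ising model with boundary conditions on (finite pieces of)
   locally finite graphs, heat-bath Glauber dynamics quantities. -/

open Finset
open scoped Classical

noncomputable section

open IsingGlauber

/-!
Write `K(c)` for the minus cluster of `y`: the vertices of `U` joined to `y` by a walk whose
vertices in `U` are all minus. Given `K = D`, the configuration is minus on `D` and plus on the
outer boundary `∂D` of `D ∪ {y}` in `U`, so every neighbour of `y` in `U` has a fixed spin and the
conditional law does not depend on the spin at `y`. Off `D ∪ ∂D` this conditional law is the Gibbs
measure with plus boundary on `∂D` (domain Markov property), and by the FKG inequality conditioning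
on the increasing event "plus on `∂D`" can only lower the probability that `x` is minus. Summing
over the clusters `D ∌ x` gives `μ⁻(σ_x = -, x ∉ K) ≤ μ⁺(σ_x = -)`, which rearranges to the claim.
-/

namespace IsingGlauber

section Mass

variable {Ω : Type*} [Fintype Ω]

def mass (w : Ω → ℝ) (s : Set Ω) : ℝ := ∑ a, s.indicator w a

variable {w : Ω → ℝ}

lemma mass_empty : mass w ∅ = 0 := by simp [mass]

lemma mass_nonneg (hw : 0 ≤ w) (s : Set Ω) : 0 ≤ mass w s :=
  Finset.sum_nonneg fun a _ => Set.indicator_nonneg (fun a _ => hw a) a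

lemma mass_mono (hw : 0 ≤ w) {s t : Set Ω} (h : s ⊆ t) : mass w s ≤ mass w t :=
  Finset.sum_le_sum fun a _ => Set.indicator_le_indicator_of_subset h hw a

lemma mass_pos (hw : ∀ a, 0 < w a) {s : Set Ω} (hs : s.Nonempty) : 0 < mass w s := by
  obtain ⟨a, ha⟩ := hs
  refine Finset.sum_pos' (fun b _ => Set.indicator_nonneg (fun b _ => (hw b).le) b)
    ⟨a, Finset.mem_univ a, ?_⟩
  rw [Set.indicator_of_mem ha]
  exact hw a

lemma mass_add_mass_compl (s : Set Ω) : mass w s + mass w sᶜ = mass w Set.univ := by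
  simp only [mass, ← Finset.sum_add_distrib, Set.indicator_self_add_compl_apply,
    Set.indicator_univ]

lemma mass_inter_add_mass_diff (s t : Set Ω) : mass w (s ∩ t) + mass w (s \ t) = mass w s := by
  simp only [mass, ← Finset.sum_add_distrib]
  refine Finset.sum_congr rfl fun a _ => ?_
  by_cases hs : a ∈ s <;> by_cases ht : a ∈ t <;> simp [hs, ht]

lemma mass_le_mass_add_mass (hw : 0 ≤ w) {s t u : Set Ω} (h : s ⊆ t ∪ u) :
    mass w s ≤ mass w t + mass w u := by
  simp only [mass, ← Finset.sum_add_distrib]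
  refine Finset.sum_le_sum fun a _ => ?_
  rw [← Set.indicator_union_add_inter_apply]
  exact le_add_of_le_of_nonneg (Set.indicator_le_indicator_of_subset h hw a)
    (Set.indicator_nonneg (fun a _ => hw a) a)

lemma mass_eq_sum_preimage {κ : Type*} [DecidableEq κ] (f : Ω → κ) (s : Set Ω) :
    mass w s = ∑ k ∈ Finset.univ.image f, mass w (s ∩ f ⁻¹' {k}) := by
  simp only [mass]
  rw [← Finset.sum_fiberwise_of_maps_to (fun a _ => Finset.mem_image_of_mem f (Finset.mem_univ a))]
  refine Finset.sum_congr rfl fun k _ => ?_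
  rw [Finset.sum_filter]
  refine Finset.sum_congr rfl fun a _ => ?_
  by_cases hk : f a = k <;> simp [Set.indicator_apply, hk]

lemma mass_mul_mass (s t : Set Ω) :
    mass w s * mass w t = ∑ p : Ω × Ω, (s ×ˢ t).indicator (fun p => w p.1 * w p.2) p := by
  rw [mass, mass, Finset.sum_mul_sum, ← Fintype.sum_prod_type']
  refine Finset.sum_congr rfl fun p _ => ?_
  by_cases h₁ : p.1 ∈ s <;> by_cases h₂ : p.2 ∈ t <;> simp [h₁, h₂]

lemma mass_mul_mass_eq_of_involutive {φ : Ω × Ω → Ω × Ω} (hφ : Function.Involutive φ)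
    {s t s' t' : Set Ω} (hmem : ∀ p, p ∈ s ×ˢ t ↔ φ p ∈ s' ×ˢ t')
    (hw : ∀ p ∈ s ×ˢ t, w p.1 * w p.2 = w (φ p).1 * w (φ p).2) :
    mass w s * mass w t = mass w s' * mass w t' := by
  rw [mass_mul_mass, mass_mul_mass, ← Equiv.sum_comp hφ.toPerm (fun p => (s' ×ˢ t').indicator _ p)]
  refine Finset.sum_congr rfl fun p _ => ?_
  rw [Function.Involutive.coe_toPerm]
  by_cases hp : p ∈ s ×ˢ t
  · rw [Set.indicator_of_mem hp, Set.indicator_of_mem ((hmem p).1 hp), hw p hp]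
  · rw [Set.indicator_of_notMem hp, Set.indicator_of_notMem (mt (hmem p).2 hp)]

lemma mass_inter_mul_mass_comm {w' : Ω → ℝ} {s : Set Ω}
    (h : ∀ a ∈ s, ∀ b ∈ s, w a * w' b = w' a * w b) (t : Set Ω) :
    mass w (t ∩ s) * mass w' s = mass w' (t ∩ s) * mass w s := by
  simp only [mass, Finset.sum_mul_sum]
  refine Finset.sum_congr rfl fun a _ => Finset.sum_congr rfl fun b _ => ?_
  by_cases ha : a ∈ t ∩ s
  · by_cases hb : b ∈ s
    · simp only [Set.indicator_of_mem ha, Set.indicator_of_mem hb, h a ha.2 b hb]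
    · simp only [Set.indicator_of_notMem hb, mul_zero]
  · simp only [Set.indicator_of_notMem ha, zero_mul]

lemma sum_mul_indicator_one (w : Ω → ℝ) (s : Set Ω) :
    ∑ a, w a * s.indicator 1 a = mass w s := by
  simp only [mass, Set.indicator_apply, Pi.one_apply, mul_ite, mul_one, mul_zero]

lemma mass_inter_mul_mass_univ_le [DistribLattice Ω] (hw₀ : 0 ≤ w)
    (hw : ∀ a b, w a * w b ≤ w (a ⊓ b) * w (a ⊔ b)) {s t : Set Ω}
    (hs : IsUpperSet s) (ht : IsLowerSet t) :
    mass w (s ∩ t) * mass w Set.univ ≤ mass w s * mass w t := by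
  have indicator_mono {u : Set Ω} (hu : IsUpperSet u) : Monotone (u.indicator (1 : Ω → ℝ)) := by
    intro a b hab
    by_cases ha : a ∈ u
    · simp [Set.indicator_of_mem ha, Set.indicator_of_mem (hu hab ha)]
    · simp only [Set.indicator_of_notMem ha]
      exact Set.indicator_nonneg (fun _ _ => zero_le_one) b
  have hfkg := fkg (s.indicator 1) (tᶜ.indicator 1) w hw₀
    (Set.indicator_nonneg fun _ _ => zero_le_one) (Set.indicator_nonneg fun _ _ => zero_le_one)
    (indicator_mono hs) (indicator_mono ht.compl) hw
  have hinter (a : Ω) : s.indicator (1 : Ω → ℝ) a * tᶜ.indicator 1 a = (s \ t).indicator 1 a := by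
    rw [Set.sdiff_eq, Set.inter_indicator_one, Pi.mul_apply]
  have hsum : ∑ a, w a = mass w Set.univ := by simp [mass]
  simp only [hinter, sum_mul_indicator_one, hsum] at hfkg
  have h₁ := mass_inter_add_mass_diff (w := w) s t
  have h₂ := mass_add_mass_compl (w := w) t
  linear_combination hfkg + mass w Set.univ * h₁ - mass w s * h₂

end Mass

section Configuration

variable {V : Type*} (U : Finset V)

def plusOn (B : Finset V) : Set (U → Bool) := {c | ∀ u : U, ↑u ∈ B → c u = true}

variable {U}

lemma mem_plusOn_congr {B : Finset V} {c c' : U → Bool} (h : ∀ u : U, ↑u ∈ B → c u = c' u) :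
    c ∈ plusOn U B ↔ c' ∈ plusOn U B :=
  forall_congr' fun u => imp_congr_right fun hu => by rw [h u hu]

lemma isUpperSet_plusOn {B : Finset V} : IsUpperSet (plusOn U B) :=
  fun _ _ hab ha u hu => top_le_iff.1 ((ha u hu).symm.trans_le (hab u))

end Configuration

variable {V : Type*} [DecidableEq V] (G : SimpleGraph V) (hlf : G.LocallyFinite)

section Energy

variable (A : Finset V)

lemma energyB_add_le_of_forall_adj {σ₁ σ₂ σ₃ σ₄ : V → Bool}
    (h : ∀ u v, G.Adj u v → spin (σ₁ u) * spin (σ₁ v) + spin (σ₂ u) * spin (σ₂ v) ≤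
      spin (σ₃ u) * spin (σ₃ v) + spin (σ₄ u) * spin (σ₄ v)) :
    energyB G hlf A σ₁ + energyB G hlf A σ₂ ≤ energyB G hlf A σ₃ + energyB G hlf A σ₄ := by
  simp only [energyB, ← mul_add, ← Finset.sum_add_distrib]
  refine mul_le_mul_of_nonneg_left (Finset.sum_le_sum fun u _ => Finset.sum_le_sum fun v hv => ?_)
    (by norm_num)
  exact h u v (Finset.mem_filter.1 hv).2

lemma energyB_add_eq_of_forall_adj {σ₁ σ₂ σ₃ σ₄ : V → Bool}
    (h : ∀ u v, G.Adj u v → spin (σ₁ u) * spin (σ₁ v) + spin (σ₂ u) * spin (σ₂ v) =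
      spin (σ₃ u) * spin (σ₃ v) + spin (σ₄ u) * spin (σ₄ v)) :
    energyB G hlf A σ₁ + energyB G hlf A σ₂ = energyB G hlf A σ₃ + energyB G hlf A σ₄ :=
  le_antisymm (energyB_add_le_of_forall_adj G hlf A fun u v huv => (h u v huv).le)
    (energyB_add_le_of_forall_adj G hlf A fun u v huv => (h u v huv).ge)

lemma energyB_update_add_update {σ σ' : V → Bool} {y : V} (h : ∀ v, G.Adj y v → σ v = σ' v)
    (b b' : Bool) :
    energyB G hlf A (Function.update σ y b) + energyB G hlf A (Function.update σ' y b') =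
      energyB G hlf A (Function.update σ y b') + energyB G hlf A (Function.update σ' y b) := by
  refine energyB_add_eq_of_forall_adj G hlf A fun u v huv => ?_
  by_cases hu : u = y
  · subst hu
    simp only [Function.update_self, Function.update_of_ne huv.ne.symm, h v huv]
    ring
  by_cases hv : v = y
  · subst hv
    simp only [Function.update_self, Function.update_of_ne huv.ne, h u huv.symm]
    ring
  · simp only [Function.update_of_ne hu, Function.update_of_ne hv]

lemma energyB_piecewise_add_piecewise {σ σ' : V → Bool} (W : Finset V)
    (h : ∀ u v, G.Adj u v → u ∈ W → v ∉ W → σ v = σ' v) :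
    energyB G hlf A σ + energyB G hlf A σ' =
      energyB G hlf A (W.piecewise σ' σ) + energyB G hlf A (W.piecewise σ σ') := by
  refine energyB_add_eq_of_forall_adj G hlf A fun u v huv => ?_
  by_cases hu : u ∈ W <;> by_cases hv : v ∈ W <;>
    simp only [Finset.piecewise_eq_of_mem, Finset.piecewise_eq_of_notMem, hu, hv,
      not_false_eq_true]
  · ring
  · rw [h u v huv hu hv]; ring
  · rw [h v u huv.symm hv hu]; ring

lemma spin_mul_add_le_inf_sup (a b c d : Bool) :
    spin a * spin c + spin b * spin d ≤
      spin (a ⊓ b) * spin (c ⊓ d) + spin (a ⊔ b) * spin (c ⊔ d) := by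
  cases a <;> cases b <;> cases c <;> cases d <;> norm_num [spin]

lemma energyB_add_le_inf_sup (σ σ' : V → Bool) :
    energyB G hlf A σ + energyB G hlf A σ' ≤
      energyB G hlf A (σ ⊓ σ') + energyB G hlf A (σ ⊔ σ') :=
  energyB_add_le_of_forall_adj G hlf A fun _ _ _ => spin_mul_add_le_inf_sup _ _ _ _

end Energy

section Cluster

variable (U : Finset V) (y : V)

def minusCluster (c : U → Bool) : Finset V :=
  U.filter fun u => ∃ p : G.Walk y u,
    ∀ v ∈ p.support, v ∈ insert y U ∧ ∀ h : v ∈ U, c ⟨v, h⟩ = false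

def clusterBoundary (D : Finset V) : Finset V :=
  U.filter fun v => v ∉ D ∧ ∃ u ∈ insert y D, G.Adj u v

def cylinder (D : Finset V) : Set (U → Bool) :=
  {c | ∀ u : U, (↑u ∈ D → c u = false) ∧ (↑u ∈ clusterBoundary G U y D → c u = true)}

variable {G U y}

lemma mem_minusCluster {c : U → Bool} {u : V} :
    u ∈ minusCluster G U y c ↔ u ∈ U ∧ ∃ p : G.Walk y u,
      ∀ v ∈ p.support, v ∈ insert y U ∧ ∀ h : v ∈ U, c ⟨v, h⟩ = false :=
  Finset.mem_filter

lemma mem_clusterBoundary {D : Finset V} {v : V} :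
    v ∈ clusterBoundary G U y D ↔ v ∈ U ∧ v ∉ D ∧ ∃ u ∈ insert y D, G.Adj u v :=
  Finset.mem_filter

lemma mem_union_clusterBoundary_of_adj {D : Finset V} {z v : V} (hz : z ∈ insert y D)
    (hzv : G.Adj z v) (hv : v ∈ U) : v ∈ D ∪ clusterBoundary G U y D := by
  by_cases hvD : v ∈ D
  · exact Finset.mem_union_left _ hvD
  · exact Finset.mem_union_right _ (mem_clusterBoundary.2 ⟨hv, hvD, z, hz, hzv⟩)

lemma support_subset_insert_minusCluster {c : U → Bool} {u : V} (p : G.Walk y u)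
    (hp : ∀ v ∈ p.support, v ∈ insert y U ∧ ∀ h : v ∈ U, c ⟨v, h⟩ = false) :
    ∀ v ∈ p.support, v ∈ insert y (minusCluster G U y c) := by
  intro v hv
  rcases Finset.mem_insert.1 (hp v hv).1 with rfl | hvU
  · exact Finset.mem_insert_self _ _
  · refine Finset.mem_insert_of_mem (mem_minusCluster.2 ⟨hvU, p.takeUntil v hv, fun z hz => ?_⟩)
    exact hp z (p.support_takeUntil_subset_support hv hz)

lemma mem_minusCluster_of_adj (hyU : y ∉ U) {c : U → Bool} {z u : V}
    (hz : z ∈ insert y (minusCluster G U y c)) (hzu : G.Adj z u) (hu : u ∈ U)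
    (hcu : c ⟨u, hu⟩ = false) : u ∈ minusCluster G U y c := by
  obtain ⟨p, hp⟩ : ∃ p : G.Walk y z,
      ∀ v ∈ p.support, v ∈ insert y U ∧ ∀ h : v ∈ U, c ⟨v, h⟩ = false := by
    rcases Finset.mem_insert.1 hz with rfl | hz
    · exact ⟨.nil, by simpa using fun h => absurd h hyU⟩
    · exact (mem_minusCluster.1 hz).2
  refine mem_minusCluster.2 ⟨hu, p.concat hzu, fun v hv => ?_⟩
  rw [SimpleGraph.Walk.support_concat, List.mem_append, List.mem_singleton] at hv
  rcases hv with hv | rfl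
  · exact hp v hv
  · exact ⟨Finset.mem_insert_of_mem hu, fun _ => hcu⟩

lemma mem_cylinder_minusCluster (hyU : y ∉ U) (c : U → Bool) :
    c ∈ cylinder G U y (minusCluster G U y c) := by
  intro u
  refine ⟨fun hu => ?_, fun hu => ?_⟩
  · obtain ⟨-, p, hp⟩ := mem_minusCluster.1 hu
    exact (hp u p.end_mem_support).2 u.2
  · obtain ⟨-, huK, z, hz, hzu⟩ := mem_clusterBoundary.1 hu
    by_contra hcu
    exact huK (mem_minusCluster_of_adj hyU hz hzu u.2 (by simpa using hcu))

lemma mem_insert_of_walk_of_mem_cylinder {D : Finset V} {c : U → Bool}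
    (hc : c ∈ cylinder G U y D) {a b : V} (p : G.Walk a b) (ha : a ∈ insert y D)
    (hp : ∀ v ∈ p.support, v ∈ insert y U ∧ ∀ h : v ∈ U, c ⟨v, h⟩ = false) :
    b ∈ insert y D := by
  induction p with
  | nil => exact ha
  | @cons a a' b haa' p ih =>
    refine ih ?_ fun v hv => hp v (List.mem_cons_of_mem _ hv)
    have ha' := hp a' (List.mem_cons_of_mem _ p.start_mem_support)
    rcases Finset.mem_insert.1 ha'.1 with rfl | ha'U
    · exact Finset.mem_insert_self _ _
    rcases Finset.mem_union.1 (mem_union_clusterBoundary_of_adj ha haa' ha'U) with hD | hT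
    · exact Finset.mem_insert_of_mem hD
    · have := (hc ⟨a', ha'U⟩).2 hT
      simp [ha'.2 ha'U] at this

lemma minusCluster_eq_of_mem_cylinder (hyU : y ∉ U) {c c₀ : U → Bool}
    (hc : c ∈ cylinder G U y (minusCluster G U y c₀)) :
    minusCluster G U y c = minusCluster G U y c₀ := by
  ext u
  constructor
  · intro hu
    obtain ⟨huU, p, hp⟩ := mem_minusCluster.1 hu
    rcases Finset.mem_insert.1
      (mem_insert_of_walk_of_mem_cylinder hc p (Finset.mem_insert_self _ _) hp) with rfl | h
    · exact absurd huU hyU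
    · exact h
  · intro hu
    obtain ⟨huU, p, hp⟩ := mem_minusCluster.1 hu
    refine mem_minusCluster.2 ⟨huU, p, fun v hv => ⟨(hp v hv).1, fun hvU => ?_⟩⟩
    rcases Finset.mem_insert.1 (support_subset_insert_minusCluster p hp v hv) with rfl | hvK
    · exact absurd hvU hyU
    · exact (hc ⟨v, hvU⟩).1 hvK

lemma eq_of_mem_cylinder {D : Finset V} {c c' : U → Bool} (hc : c ∈ cylinder G U y D)
    (hc' : c' ∈ cylinder G U y D) {u : U} (hu : ↑u ∈ D ∪ clusterBoundary G U y D) :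
    c u = c' u := by
  rcases Finset.mem_union.1 hu with hu | hu
  · rw [(hc u).1 hu, (hc' u).1 hu]
  · rw [(hc u).2 hu, (hc' u).2 hu]

lemma mem_cylinder_congr {D : Finset V} {c c' : U → Bool}
    (h : ∀ u : U, ↑u ∈ D ∪ clusterBoundary G U y D → c u = c' u) :
    c ∈ cylinder G U y D ↔ c' ∈ cylinder G U y D := by
  refine forall_congr' fun u => ?_
  by_cases hu : ↑u ∈ D ∪ clusterBoundary G U y D
  · rw [h u hu]
  · simp only [Finset.mem_union, not_or] at hu
    simp [hu.1, hu.2]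

lemma minusCluster_eq_iff (hyU : y ∉ U) {c c₀ : U → Bool} :
    minusCluster G U y c = minusCluster G U y c₀ ↔ c ∈ cylinder G U y (minusCluster G U y c₀) :=
  ⟨fun h => h ▸ mem_cylinder_minusCluster hyU c, minusCluster_eq_of_mem_cylinder hyU⟩

end Cluster

section Gibbs

variable (U : Finset V)

def extend (η : V → Bool) (c : U → Bool) : V → Bool :=
  fun v => if h : v ∈ U then c ⟨v, h⟩ else η v

variable {U}

@[simp]
lemma extend_of_mem (η : V → Bool) (c : U → Bool) {v : V} (h : v ∈ U) :
    extend U η c v = c ⟨v, h⟩ := dif_pos h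

@[simp]
lemma extend_of_notMem (η : V → Bool) (c : U → Bool) {v : V} (h : v ∉ U) :
    extend U η c v = η v := dif_neg h

lemma extend_update_of_notMem {y : V} (hyU : y ∉ U) (η : V → Bool) (b : Bool) (c : U → Bool) :
    extend U (Function.update η y b) c = Function.update (extend U η c) y b := by
  ext v
  by_cases hv : v ∈ U
  · rw [extend_of_mem _ _ hv, Function.update_of_ne (ne_of_mem_of_not_mem hv hyU),
      extend_of_mem _ _ hv]
  · by_cases hvy : v = y
    · subst hvy; simp [hv]
    · simp [hv, Function.update_of_ne hvy]

lemma extend_piecewise (η : V → Bool) (W : Finset V) (c c' : U → Bool) :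
    extend U η ((W.subtype (· ∈ U)).piecewise c' c) =
      W.piecewise (extend U η c') (extend U η c) := by
  ext v
  by_cases hv : v ∈ U <;> by_cases hW : v ∈ W <;> simp [Finset.piecewise, hv, hW]

lemma extend_inf (η : V → Bool) (c c' : U → Bool) :
    extend U η (c ⊓ c') = extend U η c ⊓ extend U η c' := by
  ext v
  by_cases hv : v ∈ U <;> simp [hv]

lemma extend_sup (η : V → Bool) (c c' : U → Bool) :
    extend U η (c ⊔ c') = extend U η c ⊔ extend U η c' := by
  ext v
  by_cases hv : v ∈ U <;> simp [hv]

variable (U) (β : ℝ)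

def isingWeight (η : V → Bool) (c : U → Bool) : ℝ :=
  Real.exp (β * energyB G hlf U (extend U η c))

lemma gProb_eq_mass (η : V → Bool) (P : (V → Bool) → Prop) :
    gProb (fun σ => β * energyB G hlf U σ) U η P =
      mass (isingWeight G hlf U β η) {c | P (extend U η c)} /
        mass (isingWeight G hlf U β η) Set.univ := by
  have hwsum (f : (V → Bool) → ℝ) : wsum (fun σ => β * energyB G hlf U σ) U η f =
      ∑ c : U → Bool, isingWeight G hlf U β η c * f (extend U η c) :=
    Finset.sum_nbij' (fun p u => p u u.2) (fun c v hv => c ⟨v, hv⟩) (by simp)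
      (by simp [Finset.mem_pi]) (fun _ _ => rfl) (fun _ _ => rfl) (fun _ _ => rfl)
  simp only [gProb, gExp, hwsum, mass, Set.indicator_apply, Set.mem_ofPred_eq, Set.mem_univ,
    if_true, mul_ite, mul_one, mul_zero]

variable {G hlf U β}

lemma isingWeight_pos (η : V → Bool) (c : U → Bool) : 0 < isingWeight G hlf U β η c :=
  Real.exp_pos _

lemma isingWeight_update_mul_comm {τ : V → Bool} {y : V} (hyU : y ∉ U) {c c' : U → Bool}
    (h : ∀ v (hv : v ∈ U), G.Adj y v → c ⟨v, hv⟩ = c' ⟨v, hv⟩) (b b' : Bool) :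
    isingWeight G hlf U β (Function.update τ y b) c *
        isingWeight G hlf U β (Function.update τ y b') c' =
      isingWeight G hlf U β (Function.update τ y b') c *
        isingWeight G hlf U β (Function.update τ y b) c' := by
  have hagree (v : V) (hv : G.Adj y v) : extend U τ c v = extend U τ c' v := by
    by_cases hvU : v ∈ U
    · simp [hvU, h v hvU hv]
    · simp [hvU]
  simp only [isingWeight, ← Real.exp_add, extend_update_of_notMem hyU, ← mul_add,
    energyB_update_add_update G hlf U hagree]

lemma isingWeight_mul_piecewise {η : V → Bool} (W : Finset V) {c c' : U → Bool}
    (h : ∀ u v, G.Adj u v → u ∈ W → v ∉ W → ∀ hv : v ∈ U, c ⟨v, hv⟩ = c' ⟨v, hv⟩) :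
    isingWeight G hlf U β η c * isingWeight G hlf U β η c' =
      isingWeight G hlf U β η ((W.subtype (· ∈ U)).piecewise c' c) *
        isingWeight G hlf U β η ((W.subtype (· ∈ U)).piecewise c c') := by
  have hagree (u v : V) (huv : G.Adj u v) (hu : u ∈ W) (hv : v ∉ W) :
      extend U η c v = extend U η c' v := by
    by_cases hvU : v ∈ U
    · simp [hvU, h u v huv hu hv hvU]
    · simp [hvU]
  simp only [isingWeight, ← Real.exp_add, extend_piecewise, ← mul_add,
    energyB_piecewise_add_piecewise G hlf U W hagree]

lemma isingWeight_mul_le_inf_sup (hβ : 0 ≤ β) (η : V → Bool) (c c' : U → Bool) :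
    isingWeight G hlf U β η c * isingWeight G hlf U β η c' ≤
      isingWeight G hlf U β η (c ⊓ c') * isingWeight G hlf U β η (c ⊔ c') := by
  simp only [isingWeight, ← Real.exp_add, Real.exp_le_exp, ← mul_add, extend_inf, extend_sup]
  exact mul_le_mul_of_nonneg_left (energyB_add_le_inf_sup G hlf U _ _) hβ

end Gibbs

section Influence

variable {U : Finset V} {β : ℝ} {τ : V → Bool} {x y : V}

local notation "w⁻" => isingWeight G hlf U β (Function.update τ y false)
local notation "w⁺" => isingWeight G hlf U β (Function.update τ y true)

lemma mass_inter_cylinder_update_comm (hyU : y ∉ U) (D : Finset V) (s : Set (U → Bool)) :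
    mass w⁻ (s ∩ cylinder G U y D) * mass w⁺ (cylinder G U y D) =
      mass w⁺ (s ∩ cylinder G U y D) * mass w⁻ (cylinder G U y D) :=
  mass_inter_mul_mass_comm (fun _ hc _ hc' => isingWeight_update_mul_comm hyU
    (fun _ hv hyv => eq_of_mem_cylinder hc hc'
      (mem_union_clusterBoundary_of_adj (Finset.mem_insert_self y D) hyv hv)) false true) s

/- Domain Markov property. Exchanging two configurations on `U \ (D ∪ ∂D)` preserves the product
of their weights, since no edge joins that set to `D` and both configurations are plus on `∂D`. -/
lemma mass_inter_cylinder_mul_mass_plusOn (η : V → Bool) {D : Finset V} {s : Set (U → Bool)}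
    (hs : ∀ c c' : U → Bool,
      (∀ u : U, ↑u ∉ D ∪ clusterBoundary G U y D → c u = c' u) → (c ∈ s ↔ c' ∈ s)) :
    mass (isingWeight G hlf U β η) (s ∩ cylinder G U y D) *
        mass (isingWeight G hlf U β η) (plusOn U (clusterBoundary G U y D)) =
      mass (isingWeight G hlf U β η) (cylinder G U y D) *
        mass (isingWeight G hlf U β η) (s ∩ plusOn U (clusterBoundary G U y D)) := by
  set B := D ∪ clusterBoundary G U y D
  set W := U \ B
  let swap (a b : U → Bool) : U → Bool := (W.subtype (· ∈ U)).piecewise b a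
  have swap_of_mem (a b : U → Bool) (u : U) (hu : ↑u ∈ B) : swap a b u = a u := by
    simp [swap, W, hu]
  have swap_of_notMem (a b : U → Bool) (u : U) (hu : ↑u ∉ B) : swap a b u = b u := by
    simp [swap, W, hu]
  refine mass_mul_mass_eq_of_involutive (φ := fun p => (swap p.1 p.2, swap p.2 p.1))
    (fun p => Prod.ext ?_ ?_) (fun p => ?_) (fun p hp => ?_)
  · funext u; by_cases hu : ↑u ∈ B <;> simp [swap_of_mem, swap_of_notMem, hu]
  · funext u; by_cases hu : ↑u ∈ B <;> simp [swap_of_mem, swap_of_notMem, hu]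
  · simp only [Set.mem_prod, Set.mem_inter_iff,
      mem_cylinder_congr (c := swap p.1 p.2) fun u hu => swap_of_mem _ _ u hu,
      hs (swap p.2 p.1) p.1 fun u hu => swap_of_notMem _ _ u hu,
      mem_plusOn_congr fun u hu => swap_of_mem p.2 p.1 u (Finset.mem_union_right _ hu)]
    tauto
  · refine isingWeight_mul_piecewise W fun u v huv hu hv hvU => ?_
    have hvB : v ∈ B := by simpa [W, hvU] using hv
    have hvT : v ∈ clusterBoundary G U y D := by
      refine (Finset.mem_union.1 hvB).resolve_left fun hvD => (Finset.mem_sdiff.1 hu).2 ?_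
      exact mem_union_clusterBoundary_of_adj (y := y) (Finset.mem_insert_of_mem hvD) huv.symm
        (Finset.mem_sdiff.1 hu).1
    rw [(hp.1.2 ⟨v, hvU⟩).2 hvT, hp.2 ⟨v, hvU⟩ hvT]

lemma mass_spin_false_inter_cylinder_mul_le (hβ : 0 ≤ β) (hyU : y ∉ U) (hxU : x ∈ U)
    {c₀ : U → Bool} (hx : x ∉ minusCluster G U y c₀) :
    mass w⁻ ({c | c ⟨x, hxU⟩ = false} ∩ cylinder G U y (minusCluster G U y c₀)) *
        mass w⁺ Set.univ ≤
      mass w⁻ (cylinder G U y (minusCluster G U y c₀)) * mass w⁺ {c | c ⟨x, hxU⟩ = false} := by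
  set D := minusCluster G U y c₀
  set C := cylinder G U y D
  set X : Set (U → Bool) := {c | c ⟨x, hxU⟩ = false}
  set T := plusOn U (clusterBoundary G U y D)
  have hwm : 0 ≤ w⁻ := fun c => (isingWeight_pos _ c).le
  have hwp : 0 ≤ w⁺ := fun c => (isingWeight_pos _ c).le
  by_cases hxT : x ∈ clusterBoundary G U y D
  · have hempty : X ∩ C = ∅ := by
      refine Set.eq_empty_of_forall_notMem fun c hc => ?_
      have := (hc.2 ⟨x, hxU⟩).2 hxT
      simp [X, this] at hc
    rw [hempty, mass_empty, zero_mul]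
    exact mul_nonneg (mass_nonneg hwm _) (mass_nonneg hwp _)
  have hflip := mass_inter_cylinder_update_comm G hlf (β := β) (τ := τ) hyU D X
  have hmarkov : mass w⁺ (X ∩ C) * mass w⁺ T = mass w⁺ C * mass w⁺ (X ∩ T) := by
    refine mass_inter_cylinder_mul_mass_plusOn G hlf _ fun c c' h => ?_
    have hxB : x ∉ D ∪ clusterBoundary G U y D := by simp [hx, hxT, D]
    simp [X, h ⟨x, hxU⟩ hxB]
  have hfkg : mass w⁺ (X ∩ T) * mass w⁺ Set.univ ≤ mass w⁺ T * mass w⁺ X := by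
    rw [Set.inter_comm]
    refine mass_inter_mul_mass_univ_le hwp (isingWeight_mul_le_inf_sup hβ _) isUpperSet_plusOn
      (fun a b hab ha => le_bot_iff.1 ((hab ⟨x, hxU⟩).trans_eq ha))
  have hC : 0 < mass w⁺ C := mass_pos (isingWeight_pos _) ⟨c₀, mem_cylinder_minusCluster hyU c₀⟩
  have hT : 0 < mass w⁺ T := mass_pos (isingWeight_pos _) ⟨fun _ => true, fun _ _ => rfl⟩
  refine le_of_mul_le_mul_right ?_ (mul_pos hC hT)
  calc mass w⁻ (X ∩ C) * mass w⁺ Set.univ * (mass w⁺ C * mass w⁺ T)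
      = mass w⁺ (X ∩ C) * mass w⁺ T * (mass w⁻ C * mass w⁺ Set.univ) := by
        linear_combination (mass w⁺ Set.univ * mass w⁺ T) * hflip
    _ = mass w⁺ (X ∩ T) * mass w⁺ Set.univ * (mass w⁻ C * mass w⁺ C) := by
        rw [hmarkov]; ring
    _ ≤ mass w⁺ T * mass w⁺ X * (mass w⁻ C * mass w⁺ C) :=
        mul_le_mul_of_nonneg_right hfkg (mul_nonneg (mass_nonneg hwm _) hC.le)
    _ = mass w⁻ C * mass w⁺ X * (mass w⁺ C * mass w⁺ T) := by ring

lemma mass_spin_false_diff_minusCluster_mul_le (hβ : 0 ≤ β) (hyU : y ∉ U) (hxU : x ∈ U) :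
    mass w⁻ ({c | c ⟨x, hxU⟩ = false} \ {c | x ∈ minusCluster G U y c}) * mass w⁺ Set.univ ≤
      mass w⁻ Set.univ * mass w⁺ {c | c ⟨x, hxU⟩ = false} := by
  have hwm : 0 ≤ w⁻ := fun c => (isingWeight_pos _ c).le
  have hwp : 0 ≤ w⁺ := fun c => (isingWeight_pos _ c).le
  rw [mass_eq_sum_preimage (w := w⁻) (minusCluster G U y),
    mass_eq_sum_preimage (w := w⁻) (minusCluster G U y) Set.univ, Finset.sum_mul, Finset.sum_mul]
  refine Finset.sum_le_sum fun D hD => ?_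
  obtain ⟨c₀, -, rfl⟩ := Finset.mem_image.1 hD
  have hfiber : minusCluster G U y ⁻¹' {minusCluster G U y c₀} =
      cylinder G U y (minusCluster G U y c₀) :=
    Set.ext fun c => minusCluster_eq_iff hyU
  rw [hfiber, Set.univ_inter]
  by_cases hx : x ∈ minusCluster G U y c₀
  · have hempty : ({c | c ⟨x, hxU⟩ = false} \ {c | x ∈ minusCluster G U y c}) ∩
        cylinder G U y (minusCluster G U y c₀) = ∅ := by
      refine Set.eq_empty_of_forall_notMem fun c hc => hc.1.2 ?_
      rwa [Set.mem_ofPred_eq, minusCluster_eq_of_mem_cylinder hyU hc.2]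
    rw [hempty, mass_empty, zero_mul]
    exact mul_nonneg (mass_nonneg hwm _) (mass_nonneg hwp _)
  refine le_trans ?_ (mass_spin_false_inter_cylinder_mul_le G hlf hβ hyU hxU hx)
  exact mul_le_mul_of_nonneg_right
    (mass_mono hwm (Set.inter_subset_inter_left _ Set.sdiff_subset)) (mass_nonneg hwp _)

theorem gProb_spin_update_true_sub_le (hβ : 0 ≤ β) (hyU : y ∉ U) (hxU : x ∈ U) :
    gProb (fun σ => β * energyB G hlf U σ) U (Function.update τ y true) (fun σ => σ x = true) -
        gProb (fun σ => β * energyB G hlf U σ) U (Function.update τ y false)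
          (fun σ => σ x = true) ≤
      gProb (fun σ => β * energyB G hlf U σ) U (Function.update τ y false)
        (fun σ => ∃ w : G.Walk y x, ∀ v ∈ w.support, v ∈ insert y U ∧ (v ∈ U → σ v = false)) := by
  set X : Set (U → Bool) := {c | c ⟨x, hxU⟩ = false}
  set K : Set (U → Bool) := {c | x ∈ minusCluster G U y c}
  have hplus (η : V → Bool) : {c : U → Bool | extend U η c x = true} = Xᶜ := by
    ext c; simp [X, hxU]
  have hwalk : {c : U → Bool | ∃ w : G.Walk y x, ∀ v ∈ w.support, v ∈ insert y U ∧
      (v ∈ U → extend U (Function.update τ y false) c v = false)} = K := by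
    ext c
    simp only [K, Set.mem_ofPred_eq, mem_minusCluster, hxU, true_and]
    refine exists_congr fun w => forall₂_congr fun v _ => and_congr_right fun _ => ?_
    exact forall_congr' fun hv => by rw [extend_of_mem _ _ hv]
  simp only [gProb_eq_mass, hplus, hwalk]
  have hZp : 0 < mass w⁺ Set.univ := mass_pos (isingWeight_pos _) Set.univ_nonempty
  have hZm : 0 < mass w⁻ Set.univ := mass_pos (isingWeight_pos _) Set.univ_nonempty
  have hwm : 0 ≤ w⁻ := fun c => (isingWeight_pos _ c).le
  have hkey := mass_spin_false_diff_minusCluster_mul_le G hlf (τ := τ) hβ hyU hxU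
  have hcover : Set.univ ⊆ (X \ K) ∪ (Xᶜ ∪ K) := fun c _ => by
    by_cases hX : c ∈ X <;> by_cases hK : c ∈ K <;> simp [hX, hK]
  have hsplit : mass w⁻ Set.univ ≤ mass w⁻ (X \ K) + (mass w⁻ Xᶜ + mass w⁻ K) :=
    (mass_le_mass_add_mass hwm hcover).trans
      (by gcongr; exact mass_le_mass_add_mass hwm subset_rfl)
  have h₁ : mass w⁺ Xᶜ / mass w⁺ Set.univ = 1 - mass w⁺ X / mass w⁺ Set.univ := by
    rw [eq_sub_iff_add_eq, ← add_div, add_comm, mass_add_mass_compl, div_self hZp.ne']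
  have h₂ : mass w⁻ (X \ K) / mass w⁻ Set.univ ≤ mass w⁺ X / mass w⁺ Set.univ := by
    rw [div_le_div_iff₀ hZm hZp]; linarith
  have h₃ : 1 ≤ (mass w⁻ (X \ K) + (mass w⁻ Xᶜ + mass w⁻ K)) / mass w⁻ Set.univ := by
    rwa [one_le_div hZm]
  rw [add_div, add_div] at h₃
  linarith

end Influence

end IsingGlauber

theorem statement12_general {V : Type*} [DecidableEq V]
    (G : SimpleGraph V) (hlf : G.LocallyFinite)
    (o : V)
    (β : ℝ) (hβ : 0 < β)
    (i : ℕ) (Bm : Finset V)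
    (S : Finset V)
    (U : Finset V) (hU : U = Bm.filter (fun v => i + 1 ≤ G.dist o v) ∪ S)
    (τ : V → Bool)
    (x : V) (hx : x ∈ S)
    (y : V) (hy : G.dist o y = i) (hyS : y ∉ S) :
    gProb (fun σ => β * energyB G hlf U σ) U (Function.update τ y true)
        (fun σ => σ x = true) -
      gProb (fun σ => β * energyB G hlf U σ) U (Function.update τ y false)
        (fun σ => σ x = true) ≤
      gProb (fun σ => β * energyB G hlf U σ) U (Function.update τ y false)
        (fun σ => ∃ w : G.Walk y x, ∀ v ∈ w.support, v ∈ insert y U ∧ (v ∈ U → σ v = false)) := by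
  have hxU : x ∈ U := hU ▸ Finset.mem_union_right _ hx
  have hyU : y ∉ U := by simp [hU, hy, hyS]
  exact gProb_spin_update_true_sub_le G hlf hβ.le hyU hxU

/-- inequality (3.19) of the paper: the influence on the spin at
`x ∈ S` of flipping the boundary spin at `y` from plus to minus is bounded by the
`μ_U^{y,-}`-probability of the event `A^c` that some path from `y` to `x` in the
subgraph induced on `U ∪ {y}` has all its `U`-vertices minus. -/
theorem statement12 {V : Type*} [DecidableEq V] [Infinite V]
    (G : SimpleGraph V) (hlf : G.LocallyFinite) (hconn : G.Connected)
    (g Δ : ℕ) (hg : 1 ≤ g) (o : V)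
    (hgrow : IsGrowing G hlf g o)
    (hΔ : ∀ v : V, (nbr G hlf v).card ≤ Δ)
    (β : ℝ) (hβ : 0 < β)
    (m i : ℕ) (him : i ≤ m) (Bm : Finset V) (hBm : ∀ v : V, v ∈ Bm ↔ G.dist o v ≤ m)
    (S : Finset V) (hS : ∀ v ∈ S, G.dist o v = i)
    (U : Finset V) (hU : U = Bm.filter (fun v => i + 1 ≤ G.dist o v) ∪ S)
    (τ : V → Bool) (hτ : ∀ v : V, G.dist o v = m + 1 → τ v = true)
    (x : V) (hx : x ∈ S)
    (y : V) (hy : G.dist o y = i) (hyS : y ∉ S) :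
    gProb (fun σ => β * energyB G hlf U σ) U (Function.update τ y true)
        (fun σ => σ x = true) -
      gProb (fun σ => β * energyB G hlf U σ) U (Function.update τ y false)
        (fun σ => σ x = true) ≤
      gProb (fun σ => β * energyB G hlf U σ) U (Function.update τ y false)
        (fun σ => ∃ w : G.Walk y x, ∀ v ∈ w.support, v ∈ insert y U ∧ (v ∈ U → σ v = false)) :=
  statement12_general G hlf o β hβ i Bm S U hU τ x hx y hy hyS
end
end

section
/- Let B = (V,E) be a finite connected graph with an odd number n of vertices whose edge isoperimetric constant satisfies i_e(B) ≥ ε > 0, let β > 0, and let μ be the free-boundary Ising Gibbs measure on {−1,+1}^V at inverse temperature β with zero external field. Then, with m_B(σ) = Σ_{x∈V} σ_x, one has μ(m_B = 1) ≤ Σ_{(S,T)} e^{−2β|E(S,T)|} ≤ C(n,(n−1)/2) · e^{−βε(n−1)} ≤ 2^n e^{−βε(n−1)}, where the first sum runs over all partitions of V into a set S of (n+1)/2 vertices and a set T of (n−1)/2 vertices, E(S,T) is the set of edges between S and T, and C(n,(n−1)/2) is the binomial coefficient. -/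
/- Common framework: Ising model with boundary conditions on (finite pieces of)
   locally finite graphs, heat-bath Glauber dynamics quantities. -/

open Finset
open scoped Classical

noncomputable section

open IsingGlauber

/-!
Writing a spin configuration as the set `S` of its `+` spins, the Ising energy drops by
twice the number of edges leaving `S` when the spins outside `S` are flipped, so its Gibbs
weight relative to the all-plus configuration is `e^{-2β|E(S,Sᶜ)|}`. Bounding the partition
function from below by the all-plus weight gives the Peierls sum over the sets `S` with
magnetization `2|S| - n = 1`. For such `S` the complement has `(n-1)/2 ≤ n/2` vertices, so
the isoperimetric inequality bounds each term by `e^{-βε(n-1)}`.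
-/

namespace IsingGlauber

variable {V : Type*}

abbrev cutEdges (G : SimpleGraph V) (S T : Finset V) : Finset (V × V) :=
  (S ×ˢ T).filter fun p => G.Adj p.1 p.2

lemma card_cutEdges_comm (G : SimpleGraph V) (S T : Finset V) :
    #(cutEdges G S T) = #(cutEdges G T S) :=
  card_equiv (Equiv.prodComm V V) fun p => by simp [G.adj_comm, and_comm]

lemma spin_mul_spin (a b : Bool) : spin a * spin b = 1 - 2 * if a ≠ b then 1 else 0 := by
  cases a <;> cases b <;> norm_num [spin]

variable [Fintype V]

lemma energyF_univ_eq_sum (G : SimpleGraph V) (σ : V → Bool) :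
    energyF G univ σ =
      (1 / 2) * ∑ p ∈ cutEdges G univ univ, spin (σ p.1) * spin (σ p.2) := by
  rw [energyF, sum_filter, sum_product]
  simp only [sum_filter]

lemma energyF_univ_eq (G : SimpleGraph V) (σ : V → Bool) :
    energyF G univ σ =
      #(cutEdges G univ univ) / 2 - #{p ∈ cutEdges G univ univ | σ p.1 ≠ σ p.2} := by
  simp only [energyF_univ_eq_sum, spin_mul_spin, sum_sub_distrib, ← mul_sum, sum_boole,
    sum_const, nsmul_eq_mul, mul_one]
  ring

variable [DecidableEq V]

def configOf (S : Finset V) : V → Bool := fun v => v ∈ S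

lemma configOf_univ : configOf (univ : Finset V) = fun _ => true := by
  funext v; simp [configOf]

lemma wsum_univ_eq_sum_configOf (E : (V → Bool) → ℝ) (η : V → Bool)
    (f : (V → Bool) → ℝ) :
    wsum E univ η f = ∑ S : Finset V, Real.exp (E (configOf S)) * f (configOf S) := by
  refine sum_nbij' (fun p => univ.filter fun v => p v (mem_univ v))
    (fun S v _ => configOf S v) (by simp) (by simp) (fun p _ => ?_) (fun S _ => ?_) (fun p _ => ?_)
  · funext v _; simp [configOf]
  · ext v; simp [configOf]
  · have : patch univ η p = configOf (univ.filter fun v => p v (mem_univ v)) := by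
      funext v; simp [patch, configOf]
    rw [this]

/-- The partition function is at least the weight of the all-plus configuration. -/
lemma gProb_univ_le (E : (V → Bool) → ℝ) (η : V → Bool) (P : (V → Bool) → Prop) :
    gProb E univ η P ≤
      ∑ S with P (configOf S), Real.exp (E (configOf S) - E fun _ => true) := by
  have hZ : Real.exp (E fun _ => true) ≤ wsum E univ η fun _ => 1 := by
    rw [wsum_univ_eq_sum_configOf, ← configOf_univ]
    simpa using single_le_sum (f := fun S => Real.exp (E (configOf S)))
      (fun S _ => (Real.exp_pos _).le) (mem_univ univ)
  calc gProb E univ η P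
      = (∑ S with P (configOf S), Real.exp (E (configOf S))) / wsum E univ η fun _ => 1 := by
        rw [gProb, gExp, wsum_univ_eq_sum_configOf, sum_filter]
        simp only [mul_ite, mul_one, mul_zero]
    _ ≤ (∑ S with P (configOf S), Real.exp (E (configOf S))) / Real.exp (E fun _ => true) :=
        div_le_div_of_nonneg_left (sum_nonneg fun _ _ => (Real.exp_pos _).le)
          (Real.exp_pos _) hZ
    _ = _ := by simp only [sum_div, Real.exp_sub]

lemma energyF_configOf (G : SimpleGraph V) (S : Finset V) :
    energyF G univ (configOf S) = energyF G univ (fun _ => true) - 2 * #(cutEdges G S Sᶜ) := by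
  have hsplit : (cutEdges G univ univ).filter (fun p => configOf S p.1 ≠ configOf S p.2) =
      cutEdges G S Sᶜ ∪ cutEdges G Sᶜ S := by
    ext ⟨x, y⟩; by_cases hx : x ∈ S <;> by_cases hy : y ∈ S <;> simp [configOf, hx, hy]
  have hdisj : Disjoint (cutEdges G S Sᶜ) (cutEdges G Sᶜ S) :=
    disjoint_filter_filter (disjoint_product.2 (Or.inl disjoint_compl_right))
  rw [energyF_univ_eq, energyF_univ_eq, hsplit, card_union_of_disjoint hdisj,
    card_cutEdges_comm G Sᶜ S]
  simp only [ne_eq, not_true_eq_false, filter_false, card_empty]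
  push_cast; ring

lemma sum_spin_configOf (S : Finset V) :
    ∑ v, spin (configOf S v) = 2 * #S - Fintype.card V := by
  have h (v : V) : spin (configOf S v) = 2 * (if v ∈ S then 1 else 0) - 1 := by
    by_cases hv : v ∈ S <;> norm_num [spin, configOf, hv]
  simp only [h, sum_sub_distrib, ← mul_sum, sum_boole, filter_mem_eq_inter, univ_inter,
    sum_const, card_univ, nsmul_eq_mul, mul_one]

lemma sum_spin_configOf_eq_one_iff (hodd : Odd (Fintype.card V)) (S : Finset V) :
    ∑ v, spin (configOf S v) = 1 ↔ #S = (Fintype.card V + 1) / 2 := by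
  have hcast : (2 * #S : ℝ) = 1 + Fintype.card V ↔ 2 * #S = 1 + Fintype.card V := by norm_cast
  rw [sum_spin_configOf, sub_eq_iff_eq_add, hcast]
  obtain ⟨k, hk⟩ := hodd
  omega

lemma le_two_mul_card_cutEdges {G : SimpleGraph V} {ε : ℝ}
    (hiso : ∀ S : Finset V, S.Nonempty → 2 * #S ≤ Fintype.card V →
      ε * #S ≤ #(cutEdges G S Sᶜ))
    (hodd : Odd (Fintype.card V)) {S : Finset V} (hS : #S = (Fintype.card V + 1) / 2) :
    ε * ((Fintype.card V : ℝ) - 1) ≤ 2 * #(cutEdges G S Sᶜ) := by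
  obtain ⟨k, hk⟩ := hodd
  have hSc : #Sᶜ = k := by rw [card_compl]; omega
  have hn : (Fintype.card V : ℝ) - 1 = 2 * k := by rw [hk]; push_cast; ring
  rcases Nat.eq_zero_or_pos k with rfl | hk0
  · simp [hn]
  · have h := hiso Sᶜ (card_pos.1 (by omega)) (by omega)
    rw [compl_compl, card_cutEdges_comm, hSc] at h
    rw [hn]; linarith

end IsingGlauber

theorem statement17_general {V : Type} [Fintype V] [DecidableEq V]
    (G : SimpleGraph V)
    (n : ℕ) (hn : n = Fintype.card V) (hodd : Odd n)
    (ε : ℝ)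
    (hiso : ∀ S : Finset V, S.Nonempty → 2 * S.card ≤ n →
      ε * (S.card : ℝ) ≤ (((S ×ˢ Sᶜ).filter (fun p => G.Adj p.1 p.2)).card : ℝ))
    (β : ℝ) (hβ : 0 < β) :
    gProb (fun σ => β * energyF G Finset.univ σ) Finset.univ (fun _ => true)
        (fun σ => ∑ v : V, spin (σ v) = 1) ≤
      ∑ S ∈ Finset.powersetCard ((n + 1) / 2) (Finset.univ : Finset V),
        Real.exp (-2 * β * (((S ×ˢ Sᶜ).filter (fun p => G.Adj p.1 p.2)).card : ℝ)) ∧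
    (∑ S ∈ Finset.powersetCard ((n + 1) / 2) (Finset.univ : Finset V),
        Real.exp (-2 * β * (((S ×ˢ Sᶜ).filter (fun p => G.Adj p.1 p.2)).card : ℝ))) ≤
      (n.choose ((n - 1) / 2) : ℝ) * Real.exp (-β * ε * ((n : ℝ) - 1)) ∧
    (n.choose ((n - 1) / 2) : ℝ) * Real.exp (-β * ε * ((n : ℝ) - 1)) ≤
      2 ^ n * Real.exp (-β * ε * ((n : ℝ) - 1)) := by
  subst hn
  refine ⟨?_, ?_, ?_⟩
  · refine (gProb_univ_le _ _ _).trans (le_of_eq ?_)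
    rw [powersetCard_eq_filter, powerset_univ]
    refine sum_congr (filter_congr fun S _ => sum_spin_configOf_eq_one_iff hodd S) fun S _ => ?_
    rw [energyF_configOf]
    congr 1; ring
  · have hterm (S) (hS : S ∈ powersetCard ((Fintype.card V + 1) / 2) (univ : Finset V)) :
        Real.exp (-2 * β * #(cutEdges G S Sᶜ)) ≤
          Real.exp (-β * ε * ((Fintype.card V : ℝ) - 1)) := by
      have := le_two_mul_card_cutEdges hiso hodd (mem_powersetCard.1 hS).2
      exact Real.exp_le_exp.2 (by nlinarith)
    refine (sum_le_card_nsmul _ _ _ hterm).trans_eq ?_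
    obtain ⟨k, hk⟩ := hodd
    rw [card_powersetCard, card_univ, nsmul_eq_mul, ← Nat.choose_symm (by omega)]
    congr 3; omega
  · gcongr
    exact_mod_cast Nat.choose_le_two_pow _ _

/-- estimate (5.7)–(5.8) of the paper: on a finite connected graph
with odd `n = |V|` and edge isoperimetric constant at least `ε`, the free-boundary
Ising probability of magnetization `1` is bounded by the Peierls sum over
partitions `(S,T)` with `|S| = (n+1)/2`, which is at most
`C(n,(n-1)/2) e^{-βε(n-1)} ≤ 2^n e^{-βε(n-1)}`. -/
theorem statement17 {V : Type} [Fintype V] [DecidableEq V]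
    (G : SimpleGraph V) (hconn : G.Connected)
    (n : ℕ) (hn : n = Fintype.card V) (hodd : Odd n)
    (ε : ℝ) (hε : 0 < ε)
    (hiso : ∀ S : Finset V, S.Nonempty → 2 * S.card ≤ n →
      ε * (S.card : ℝ) ≤ (((S ×ˢ Sᶜ).filter (fun p => G.Adj p.1 p.2)).card : ℝ))
    (β : ℝ) (hβ : 0 < β) :
    gProb (fun σ => β * energyF G Finset.univ σ) Finset.univ (fun _ => true)
        (fun σ => ∑ v : V, spin (σ v) = 1) ≤
      ∑ S ∈ Finset.powersetCard ((n + 1) / 2) (Finset.univ : Finset V),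
        Real.exp (-2 * β * (((S ×ˢ Sᶜ).filter (fun p => G.Adj p.1 p.2)).card : ℝ)) ∧
    (∑ S ∈ Finset.powersetCard ((n + 1) / 2) (Finset.univ : Finset V),
        Real.exp (-2 * β * (((S ×ˢ Sᶜ).filter (fun p => G.Adj p.1 p.2)).card : ℝ))) ≤
      (n.choose ((n - 1) / 2) : ℝ) * Real.exp (-β * ε * ((n : ℝ) - 1)) ∧
    (n.choose ((n - 1) / 2) : ℝ) * Real.exp (-β * ε * ((n : ℝ) - 1)) ≤
      2 ^ n * Real.exp (-β * ε * ((n : ℝ) - 1)) :=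
  statement17_general G n hn hodd ε hiso β hβ
end
end
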